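/- Let C be an abelian category and 𝒲 a class of objects of C closed under isomorphisms and finite direct sums. Let 0→X→Y→Z→0 be a short exact sequence in C that is both Hom(𝒲,−)-exact and Hom(−,𝒲)-exact. If X and Z belong to the Gorenstein category G(𝒲), then Y belongs to G(𝒲). -/

import Mathlib

open CategoryTheory Category Limits

universe v u

variable {C : Type u} [Category.{v} C] [Abelian C]

def SES {A B X : C} (f : A ⟶ B) (g : B ⟶ X) : Prop :=
  ∃ w : f ≫ g = 0, (CategoryTheory.ShortComplex.mk f g w).ShortExact

def CovExact (𝒲 : Set C) {A B X : C} (f : A ⟶ B) (g : B ⟶ X) : Prop :=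
  ∀ W ∈ 𝒲,
    (Function.Injective fun u : W ⟶ A => u ≫ f) ∧
    (∀ v : W ⟶ B, v ≫ g = 0 → ∃ u : W ⟶ A, u ≫ f = v) ∧
    (Function.Surjective fun v : W ⟶ B => v ≫ g)

def ContraExact (𝒲 : Set C) {A B X : C} (f : A ⟶ B) (g : B ⟶ X) : Prop :=
  ∀ W ∈ 𝒲,
    (Function.Injective fun u : X ⟶ W => g ≫ u) ∧
    (∀ v : B ⟶ W, f ≫ v = 0 → ∃ u : X ⟶ W, g ≫ u = v) ∧
    (Function.Surjective fun v : B ⟶ W => f ≫ v)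

/-- A proper `𝒲`-resolution of `A` with terms `W i`: short exact sequences
`0 ⟶ K (i+1) ⟶ W i ⟶ K i ⟶ 0` with `K 0 = A`, each `W i ∈ 𝒲`, each `Hom(𝒲,-)`-exact. -/
structure ProperResolution (𝒲 : Set C) (A : C) (W : ℕ → C) where
  K : ℕ → C
  hK : K 0 = A
  g : ∀ i, K (i + 1) ⟶ W i
  f : ∀ i, W i ⟶ K i
  mem : ∀ i, W i ∈ 𝒲
  ses : ∀ i, SES (g i) (f i)
  proper : ∀ i, CovExact 𝒲 (g i) (f i)

/-- The proper resolution is in addition `Hom(-,𝒲)`-exact. -/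
def ProperResolution.IsContraExact {𝒲 : Set C} {A : C} {W : ℕ → C}
    (R : ProperResolution 𝒲 A W) : Prop :=
  ∀ i, ContraExact 𝒲 (R.g i) (R.f i)

/-- A coproper `𝒲`-coresolution of `A` with terms `W i`: short exact sequences
`0 ⟶ K i ⟶ W i ⟶ K (i+1) ⟶ 0` with `K 0 = A`, each `W i ∈ 𝒲`, each `Hom(-,𝒲)`-exact. -/
structure CoproperCoresolution (𝒲 : Set C) (A : C) (W : ℕ → C) where
  K : ℕ → C
  hK : K 0 = A
  g : ∀ i, K i ⟶ W i
  f : ∀ i, W i ⟶ K (i + 1)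
  mem : ∀ i, W i ∈ 𝒲
  ses : ∀ i, SES (g i) (f i)
  coproper : ∀ i, ContraExact 𝒲 (g i) (f i)

/-- The coproper coresolution is in addition `Hom(𝒲,-)`-exact. -/
def CoproperCoresolution.IsCovExact {𝒲 : Set C} {A : C} {W : ℕ → C}
    (R : CoproperCoresolution 𝒲 A W) : Prop :=
  ∀ i, CovExact 𝒲 (R.g i) (R.f i)

/-- Membership in the Gorenstein category `G(𝒲)`: `X` admits both a proper `𝒲`-resolution
which is `Hom(-,𝒲)`-exact and a coproper `𝒲`-coresolution which is `Hom(𝒲,-)`-exact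
(i.e. a complete `𝒲`-resolution). -/
def MemGW (𝒲 : Set C) (X : C) : Prop :=
  (∃ (W : ℕ → C) (R : ProperResolution 𝒲 X W), R.IsContraExact) ∧
  (∃ (W : ℕ → C) (R : CoproperCoresolution 𝒲 X W), R.IsCovExact)

/-!
A relative horseshoe lemma. Given the first steps `0 → K_X → W_X → X → 0` and
`0 → K_Z → W_Z → Z → 0` of proper resolutions, lift `W_Z → Z` along `Y → Z`, which is possible
because the sequence is `Hom(𝒲,-)`-exact, to get an epimorphism `W_X ⊞ W_Z → Y`. By the snake
lemma its kernel `K_Y` sits in a short exact sequence `0 → K_X → K_Y → K_Z → 0`, and the relative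
exactness properties of all the rows and columns propagate by diagram chases, so the step can be
iterated. A coproper coresolution is a proper resolution in `Cᵒᵖ` for the opposite class, with
the two kinds of relative exactness exchanged, so the same construction in `Cᵒᵖ` gives the
coresolution of `Y`.
-/

open Opposite

namespace SES

variable {A B X : C} {f : A ⟶ B} {g : B ⟶ X}

lemma w (h : SES f g) : f ≫ g = 0 := h.choose

lemma shortExact (h : SES f g) : (ShortComplex.mk f g h.w).ShortExact := h.choose_spec

lemma mono (h : SES f g) : Mono f := h.shortExact.mono_f

lemma epi (h : SES f g) : Epi g := h.shortExact.epi_g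

lemma exists_lift (h : SES f g) {T : C} (v : T ⟶ B) (hv : v ≫ g = 0) :
    ∃ u : T ⟶ A, u ≫ f = v :=
  have := h.mono
  ⟨h.shortExact.exact.lift v hv, h.shortExact.exact.lift_f v hv⟩

lemma exists_desc (h : SES f g) {T : C} (v : B ⟶ T) (hv : f ≫ v = 0) :
    ∃ u : X ⟶ T, g ≫ u = v :=
  have := h.epi
  ⟨h.shortExact.exact.desc v hv, h.shortExact.exact.g_desc v hv⟩

lemma kernel_ι {A B : C} (p : A ⟶ B) [Epi p] : SES (kernel.ι p) p :=
  ⟨kernel.condition p, ShortComplex.ShortExact.mk'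
    (ShortComplex.exact_of_f_is_kernel _ (kernelIsKernel p)) inferInstance inferInstance⟩

lemma op (h : SES f g) : SES g.op f.op :=
  ⟨by rw [← op_comp, h.w, op_zero], h.shortExact.op⟩

lemma unop {A B X : Cᵒᵖ} {f : A ⟶ B} {g : B ⟶ X} (h : SES f g) : SES g.unop f.unop :=
  ⟨by rw [← unop_comp, h.w, unop_zero], h.shortExact.unop⟩

end SES

lemma CategoryTheory.Limits.BinaryBicone.IsBilimit.ses_inl_snd {P Q : C} {b : BinaryBicone P Q}
    (hb : b.IsBilimit) : SES b.inl b.snd :=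
  ⟨b.inl_snd, (ShortComplex.Splitting.mk b.fst b.inr b.inl_fst b.inr_snd
    (IsBilimit.binary_total hb)).shortExact⟩

section

variable {D : Type*} [Category D]

def CovEpi (𝒲 : Set D) {B X : D} (g : B ⟶ X) : Prop :=
  ∀ W ∈ 𝒲, ∀ v : W ⟶ X, ∃ u : W ⟶ B, u ≫ g = v

def ContraMono (𝒲 : Set D) {A B : D} (f : A ⟶ B) : Prop :=
  ∀ W ∈ 𝒲, ∀ v : A ⟶ W, ∃ u : B ⟶ W, f ≫ u = v

variable {𝒲 : Set D}

lemma covEpi_op_iff {A B : D} {f : A ⟶ B} : CovEpi 𝒲.op f.op ↔ ContraMono 𝒲 f := by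
  refine ⟨fun h W hW v => ?_, fun h W hW v => ?_⟩
  · obtain ⟨u, hu⟩ := h (op W) hW v.op
    exact ⟨u.unop, Quiver.Hom.op_inj hu⟩
  · obtain ⟨u, hu⟩ := h W.unop hW v.unop
    exact ⟨u.op, Quiver.Hom.unop_inj hu⟩

lemma contraMono_op_iff {A B : D} {f : A ⟶ B} : ContraMono 𝒲.op f.op ↔ CovEpi 𝒲 f := by
  refine ⟨fun h W hW v => ?_, fun h W hW v => ?_⟩
  · obtain ⟨u, hu⟩ := h (op W) hW v.op
    exact ⟨u.unop, Quiver.Hom.op_inj hu⟩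
  · obtain ⟨u, hu⟩ := h W.unop hW v.unop
    exact ⟨u.op, Quiver.Hom.unop_inj hu⟩

end

variable {𝒲 : Set C}

namespace SES

variable {A B X : C} {f : A ⟶ B} {g : B ⟶ X}

lemma covExact_iff (h : SES f g) : CovExact 𝒲 f g ↔ CovEpi 𝒲 g := by
  have := h.mono
  exact ⟨fun hc W hW => (hc W hW).2.2,
    fun hg W hW => ⟨fun _ _ => (cancel_mono f).1, h.exists_lift, hg W hW⟩⟩

lemma contraExact_iff (h : SES f g) : ContraExact 𝒲 f g ↔ ContraMono 𝒲 f := by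
  have := h.epi
  exact ⟨fun hc W hW => (hc W hW).2.2,
    fun hf W hW => ⟨fun _ _ => (cancel_epi g).1, h.exists_desc, hf W hW⟩⟩

lemma covExact_iff_contraExact_op (h : SES f g) :
    CovExact 𝒲 f g ↔ ContraExact 𝒲.op g.op f.op := by
  rw [h.covExact_iff, h.op.contraExact_iff, contraMono_op_iff]

lemma contraExact_iff_covExact_op (h : SES f g) :
    ContraExact 𝒲 f g ↔ CovExact 𝒲.op g.op f.op := by
  rw [h.contraExact_iff, h.op.covExact_iff, covEpi_op_iff]

end SES

def CoproperCoresolution.op {A : C} {W : ℕ → C} (S : CoproperCoresolution 𝒲 A W) :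
    ProperResolution 𝒲.op (Opposite.op A) (fun i => Opposite.op (W i)) where
  K i := Opposite.op (S.K i)
  hK := by rw [S.hK]
  g i := (S.f i).op
  f i := (S.g i).op
  mem := S.mem
  ses i := (S.ses i).op
  proper i := (S.ses i).contraExact_iff_covExact_op.1 (S.coproper i)

lemma CoproperCoresolution.IsCovExact.op {A : C} {W : ℕ → C} {S : CoproperCoresolution 𝒲 A W}
    (h : S.IsCovExact) : S.op.IsContraExact :=
  fun i => (S.ses i).covExact_iff_contraExact_op.1 (h i)

def ProperResolution.unop {A : Cᵒᵖ} {W : ℕ → Cᵒᵖ} (R : ProperResolution 𝒲.op A W) :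
    CoproperCoresolution 𝒲 A.unop (fun i => (W i).unop) where
  K i := (R.K i).unop
  hK := by rw [R.hK]
  g i := (R.f i).unop
  f i := (R.g i).unop
  mem := R.mem
  ses i := (R.ses i).unop
  coproper i := (R.ses i).unop.contraExact_iff_covExact_op.2 (R.proper i)

lemma ProperResolution.IsContraExact.unop {A : Cᵒᵖ} {W : ℕ → Cᵒᵖ}
    {R : ProperResolution 𝒲.op A W} (h : R.IsContraExact) : R.unop.IsCovExact :=
  fun i => (R.ses i).unop.covExact_iff_contraExact_op.2 (h i)

section Diagram

variable {A₁ A₂ A₃ B₁ B₂ B₃ : C} {ι : A₁ ⟶ A₂} {π : A₂ ⟶ A₃} {f : B₁ ⟶ B₂} {g : B₂ ⟶ B₃}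

lemma covEpi_of_covEpi_of_covEpi {p₁ : A₁ ⟶ B₁} {p₂ : A₂ ⟶ B₂} {p₃ : A₃ ⟶ B₃}
    (hfg : SES f g) (h₁₂ : ι ≫ p₂ = p₁ ≫ f) (h₂₃ : π ≫ p₃ = p₂ ≫ g) (hπ : CovEpi 𝒲 π)
    (hp₁ : CovEpi 𝒲 p₁) (hp₃ : CovEpi 𝒲 p₃) : CovEpi 𝒲 p₂ := by
  intro W hW v
  obtain ⟨s, hs⟩ := hp₃ W hW (v ≫ g)
  obtain ⟨s, rfl⟩ := hπ W hW s
  obtain ⟨r, hr⟩ := hfg.exists_lift (v - s ≫ p₂) (by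
    rw [Preadditive.sub_comp, assoc, ← h₂₃, ← assoc, hs, sub_self])
  obtain ⟨q, rfl⟩ := hp₁ W hW r
  exact ⟨q ≫ ι + s, by rw [Preadditive.add_comp, assoc, h₁₂, ← assoc, hr, sub_add_cancel]⟩

lemma contraMono_of_contraMono_of_contraMono {k₁ : B₁ ⟶ A₁} {k₂ : B₂ ⟶ A₂} {k₃ : B₃ ⟶ A₃}
    (hfg : SES f g) (h₁₂ : f ≫ k₂ = k₁ ≫ ι) (h₂₃ : g ≫ k₃ = k₂ ≫ π) (hι : ContraMono 𝒲 ι)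
    (hk₁ : ContraMono 𝒲 k₁) (hk₃ : ContraMono 𝒲 k₃) : ContraMono 𝒲 k₂ :=
  covEpi_op_iff.1 <| covEpi_of_covEpi_of_covEpi hfg.op
    (by rw [← op_comp, ← op_comp, h₂₃]) (by rw [← op_comp, ← op_comp, h₁₂])
    (covEpi_op_iff.2 hι) (covEpi_op_iff.2 hk₃) (covEpi_op_iff.2 hk₁)

variable {p₁ : A₁ ⟶ B₁} {p₂ : A₂ ⟶ B₂} {p₃ : A₃ ⟶ B₃} {K₁ K₂ K₃ : C}
  {k₁ : K₁ ⟶ A₁} {k₂ : K₂ ⟶ A₂} {k₃ : K₃ ⟶ A₃} {f' : K₁ ⟶ K₂} {g' : K₂ ⟶ K₃}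

lemma exists_lift_of_kernels (hιπ : ι ≫ π = 0) (h₂ : SES k₂ p₂) (h₃ : SES k₃ p₃)
    (hg' : g' ≫ k₃ = k₂ ≫ π) {T : C} (z : T ⟶ K₃) (a : T ⟶ A₂) (ha : a ≫ π = z ≫ k₃)
    (q : T ⟶ A₁) (hq : (a - q ≫ ι) ≫ p₂ = 0) : ∃ y : T ⟶ K₂, y ≫ g' = z := by
  have := h₃.mono
  obtain ⟨y, hy⟩ := h₂.exists_lift _ hq
  refine ⟨y, ?_⟩
  rw [← cancel_mono k₃, assoc, hg', reassoc_of% hy, Preadditive.sub_comp, assoc, hιπ,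
    comp_zero, sub_zero, ha]

lemma SES.of_kernels (hιπ : SES ι π) (hfg : SES f g) (h₁ : SES k₁ p₁) (h₂ : SES k₂ p₂)
    (h₃ : SES k₃ p₃) (h₁₂ : ι ≫ p₂ = p₁ ≫ f) (h₂₃ : π ≫ p₃ = p₂ ≫ g)
    (hf' : f' ≫ k₂ = k₁ ≫ ι) (hg' : g' ≫ k₃ = k₂ ≫ π) : SES f' g' := by
  have := hιπ.mono; have := hιπ.epi; have := hfg.mono
  have := h₁.mono; have := h₁.epi; have := h₂.mono; have := h₃.mono
  have hw : f' ≫ g' = 0 := by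
    rw [← cancel_mono k₃, assoc, hg', reassoc_of% hf', hιπ.w, comp_zero, zero_comp]
  have : Mono f' := by
    have : Mono (f' ≫ k₂) := by rw [hf']; infer_instance
    exact mono_of_mono f' k₂
  have : Epi g' := by
    rw [epi_iff_surjective_up_to_refinements]
    intro T z
    obtain ⟨T₁, π₁, _, a, ha⟩ := surjective_up_to_refinements_of_epi π (z ≫ k₃)
    obtain ⟨x, hx⟩ := hfg.exists_lift (a ≫ p₂) (by
      rw [assoc, ← h₂₃, ← assoc, ← ha, assoc, assoc, h₃.w, comp_zero, comp_zero])
    obtain ⟨T₂, π₂, _, q, hq⟩ := surjective_up_to_refinements_of_epi p₁ x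
    obtain ⟨y, hy⟩ := exists_lift_of_kernels hιπ.w h₂ h₃ hg' (π₂ ≫ π₁ ≫ z) (π₂ ≫ a)
      (by simp only [assoc, ← ha]) q (by
        rw [Preadditive.sub_comp, assoc, assoc, h₁₂, ← hx, ← reassoc_of% hq, sub_self])
    exact ⟨T₂, π₂ ≫ π₁, epi_comp _ _, y, by rw [hy, assoc]⟩
  refine ⟨hw, ShortComplex.ShortExact.mk' ?_ inferInstance inferInstance⟩
  refine (ShortComplex.exact_iff_exact_up_to_refinements _).2 fun T u hu => ?_
  obtain ⟨v, hv⟩ := hιπ.exists_lift (u ≫ k₂) (by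
    rw [assoc, ← hg', ← assoc, hu, zero_comp])
  obtain ⟨r, hr⟩ := h₁.exists_lift v (by
    rw [← cancel_mono f, assoc, ← h₁₂, ← assoc, hv, assoc, h₂.w, comp_zero, zero_comp])
  exact ⟨T, 𝟙 T, inferInstance, r, by
    rw [id_comp, ← cancel_mono k₂, assoc, hf', ← assoc, hr, hv]⟩

lemma covEpi_of_kernels (hιπ : ι ≫ π = 0) (hfg : SES f g) (h₂ : SES k₂ p₂)
    (h₃ : SES k₃ p₃) (h₁₂ : ι ≫ p₂ = p₁ ≫ f) (h₂₃ : π ≫ p₃ = p₂ ≫ g)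
    (hg' : g' ≫ k₃ = k₂ ≫ π) (hπ : CovEpi 𝒲 π) (hp₁ : CovEpi 𝒲 p₁) : CovEpi 𝒲 g' := by
  intro W hW z
  obtain ⟨a, ha⟩ := hπ W hW (z ≫ k₃)
  obtain ⟨x, hx⟩ := hfg.exists_lift (a ≫ p₂) (by
    rw [assoc, ← h₂₃, ← assoc, ha, assoc, h₃.w, comp_zero])
  obtain ⟨q, rfl⟩ := hp₁ W hW x
  exact exists_lift_of_kernels hιπ h₂ h₃ hg' z a ha q (by
    rw [Preadditive.sub_comp, assoc, h₁₂, ← hx, assoc, sub_self])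

end Diagram

theorem horseshoe {X Y Z KX WX KZ WZ : C} {f : X ⟶ Y} {g : Y ⟶ Z}
    (hfg : SES f g) (hg : CovEpi 𝒲 g)
    {kX : KX ⟶ WX} {pX : WX ⟶ X} (hX : SES kX pX) (hpX : CovEpi 𝒲 pX) (hkX : ContraMono 𝒲 kX)
    {kZ : KZ ⟶ WZ} {pZ : WZ ⟶ Z} (hZ : SES kZ pZ) (hpZ : CovEpi 𝒲 pZ) (hkZ : ContraMono 𝒲 kZ)
    (hWZ : WZ ∈ 𝒲) {b : BinaryBicone WX WZ} (hb : b.IsBilimit) :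
    ∃ (KY : C) (f' : KX ⟶ KY) (g' : KY ⟶ KZ) (kY : KY ⟶ b.pt) (pY : b.pt ⟶ Y),
      (SES f' g' ∧ CovEpi 𝒲 g') ∧ (SES kY pY ∧ CovEpi 𝒲 pY ∧ ContraMono 𝒲 kY) := by
  have hb' := hb.ses_inl_snd
  have := hb'.epi; have := hfg.epi; have := hX.epi; have := hZ.epi
  have hsnd : CovEpi 𝒲 b.snd := fun _ _ v => ⟨v ≫ b.inr, by simp⟩
  have hinl : ContraMono 𝒲 b.inl := fun _ _ v => ⟨b.fst ≫ v, by simp⟩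
  obtain ⟨t, ht⟩ := hg WZ hWZ pZ
  let pY := b.fst ≫ pX ≫ f + b.snd ≫ t
  have h₁₂ : b.inl ≫ pY = pX ≫ f := by simp [pY]
  have h₂₃ : b.snd ≫ pZ = pY ≫ g := by simp [pY, hfg.w, ht]
  have : Epi pY := ShortComplex.epi_τ₂_of_exact_of_epi
    (S₁ := ShortComplex.mk _ _ hb'.w) (S₂ := ShortComplex.mk _ _ hfg.w)
    { τ₁ := pX, τ₂ := pY, τ₃ := pZ, comm₁₂ := h₁₂.symm, comm₂₃ := h₂₃.symm }
    hfg.shortExact.exact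
  have hY := SES.kernel_ι pY
  let f' : KX ⟶ kernel pY :=
    kernel.lift pY (kX ≫ b.inl) (by rw [assoc, h₁₂, reassoc_of% hX.w, zero_comp])
  have hf' : f' ≫ kernel.ι pY = kX ≫ b.inl := kernel.lift_ι _ _ _
  obtain ⟨g', hg'⟩ := hZ.exists_lift (kernel.ι pY ≫ b.snd) (by
    rw [assoc, h₂₃, kernel.condition_assoc, zero_comp])
  have hf'g' := SES.of_kernels hb' hfg hX hY hZ h₁₂ h₂₃ hf' hg'
  exact ⟨_, f', g', kernel.ι pY, pY,
    ⟨hf'g', covEpi_of_kernels hb'.w hfg hY hZ h₁₂ h₂₃ hg' hsnd hpX⟩, hY,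
    covEpi_of_covEpi_of_covEpi hfg h₁₂ h₂₃ hsnd hpX hpZ,
    contraMono_of_contraMono_of_contraMono hf'g' hf' hg' hinl hkX hkZ⟩

lemma ProperResolution.covEpi {A : C} {W : ℕ → C} (R : ProperResolution 𝒲 A W) (i : ℕ) :
    CovEpi 𝒲 (R.f i) :=
  (R.ses i).covExact_iff.1 (R.proper i)

lemma ProperResolution.IsContraExact.contraMono {A : C} {W : ℕ → C}
    {R : ProperResolution 𝒲 A W} (h : R.IsContraExact) (i : ℕ) : ContraMono 𝒲 (R.g i) :=
  (R.ses i).contraExact_iff.1 (h i)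

lemma ProperResolution.exists_of_step {A : C} {W : ℕ → C} (hW : ∀ i, W i ∈ 𝒲)
    (P : ℕ → C → Prop) (h0 : P 0 A)
    (step : ∀ i K, P i K → ∃ (K' : C) (k : K' ⟶ W i) (p : W i ⟶ K),
      P (i + 1) K' ∧ SES k p ∧ CovEpi 𝒲 p ∧ ContraMono 𝒲 k) :
    ∃ R : ProperResolution 𝒲 A W, R.IsContraExact := by
  choose next k p hP hses hp hk using step
  let K (i : ℕ) : {K : C // P i K} :=
    Nat.rec ⟨A, h0⟩ (fun i K => ⟨next i K.1 K.2, hP i K.1 K.2⟩) i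
  exact ⟨{ K := fun i => (K i).1
           hK := rfl
           g := fun i => k i _ (K i).2
           f := fun i => p i _ (K i).2
           mem := hW
           ses := fun i => hses i _ _
           proper := fun i => (hses i _ _).covExact_iff.2 (hp i _ _) },
    fun i => (hses i _ _).contraExact_iff.2 (hk i _ _)⟩

/-- Stated for arbitrary biproduct bicones so that it also applies in `Cᵒᵖ` to the opposites of
biproducts of `C`. -/
theorem exists_properResolution_of_ses {X Y Z : C} {f : X ⟶ Y} {g : Y ⟶ Z}
    (hfg : SES f g) (hg : CovEpi 𝒲 g) {WX WZ : ℕ → C}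
    (RX : ProperResolution 𝒲 X WX) (hRX : RX.IsContraExact)
    (RZ : ProperResolution 𝒲 Z WZ) (hRZ : RZ.IsContraExact)
    (b : ∀ i, BinaryBicone (WX i) (WZ i)) (hb : ∀ i, (b i).IsBilimit) (hW : ∀ i, (b i).pt ∈ 𝒲) :
    ∃ R : ProperResolution 𝒲 Y (fun i => (b i).pt), R.IsContraExact := by
  refine ProperResolution.exists_of_step hW
    (fun i K => ∃ (f : RX.K i ⟶ K) (g : K ⟶ RZ.K i), SES f g ∧ CovEpi 𝒲 g) ?_ ?_
  · rw [RX.hK, RZ.hK]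
    exact ⟨f, g, hfg, hg⟩
  · rintro i K ⟨f, g, hfg, hg⟩
    obtain ⟨K', f', g', k, p, ⟨hf'g', hg'⟩, hkp, hp, hk⟩ :=
      horseshoe hfg hg (RX.ses i) (RX.covEpi i) (hRX.contraMono i)
        (RZ.ses i) (RZ.covEpi i) (hRZ.contraMono i) (RZ.mem i) (hb i)
    exact ⟨K', k, p, ⟨f', g', hf'g', hg'⟩, hkp, hp, hk⟩

theorem stmt_12_general (𝒲 : Set C)
    (hsum : ∀ {U V : C}, U ∈ 𝒲 → V ∈ 𝒲 → (U ⊞ V) ∈ 𝒲)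
    {X Y Z : C} (f : X ⟶ Y) (g : Y ⟶ Z)
    (hses : SES f g) (hcov : CovExact 𝒲 f g) (hcon : ContraExact 𝒲 f g)
    (hX : MemGW 𝒲 X) (hZ : MemGW 𝒲 Z) :
    MemGW 𝒲 Y := by
  obtain ⟨⟨_, RX, hRX⟩, ⟨_, SX, hSX⟩⟩ := hX
  obtain ⟨⟨_, RZ, hRZ⟩, ⟨_, SZ, hSZ⟩⟩ := hZ
  refine ⟨⟨_, exists_properResolution_of_ses hses (hses.covExact_iff.1 hcov) RX hRX RZ hRZ
    (fun _ => BinaryBiproduct.bicone _ _) (fun _ => BinaryBiproduct.isBilimit _ _)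
    (fun i => hsum (RX.mem i) (RZ.mem i))⟩, ?_⟩
  obtain ⟨R, hR⟩ := exists_properResolution_of_ses hses.op
    (covEpi_op_iff.2 (hses.contraExact_iff.1 hcon)) SZ.op hSZ.op SX.op hSX.op
    (fun _ => (BinaryBiproduct.bicone _ _).op)
    (fun _ => (BinaryBiproduct.isBilimit _ _).op)
    (fun i => hsum (SZ.mem i) (SX.mem i))
  exact ⟨_, R.unop, hR.unop⟩

/-- If `0→X→Y→Z→0` is both `Hom(𝒲,-)`-exact and `Hom(-,𝒲)`-exact and
`X, Z ∈ G(𝒲)`, then `Y ∈ G(𝒲)`. -/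
theorem stmt_12 (𝒲 : Set C)
    (hiso : ∀ {U V : C}, (U ≅ V) → U ∈ 𝒲 → V ∈ 𝒲)
    (hsum : ∀ {U V : C}, U ∈ 𝒲 → V ∈ 𝒲 → (U ⊞ V) ∈ 𝒲)
    {X Y Z : C} (f : X ⟶ Y) (g : Y ⟶ Z)
    (hses : SES f g) (hcov : CovExact 𝒲 f g) (hcon : ContraExact 𝒲 f g)
    (hX : MemGW 𝒲 X) (hZ : MemGW 𝒲 Z) :
    MemGW 𝒲 Y :=
  stmt_12_general 𝒲 hsum f g hses hcov hcon hX hZ
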